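/- For every t ∈ ℝ and every nonzero integral ideal 𝔫 = 𝔫₀𝔫₁² of 𝒪, the 𝒩⁺-transform of the arithmetic function 𝔪 ↦ N(𝔪)^t satisfies 𝒩⁺[N^t](𝔫) = N(𝔫)^t · ∏_{v ∈ S(𝔫₁)∖S₂(𝔫)} (1 + q_v^{−2(t+1)}) · ∏_{v ∈ S₂(𝔫)} (1 + (1 − q_v^{−1})^{−1} q_v^{−2(t+1)}). -/

import Mathlib

/- Dividing `𝔫` by `∏_{v ∈ I} 𝔭_v²` lowers `ord_v` by two exactly at the primes of `I`, so the
weight `ω`, the ratio of the `ι`'s and the ratio of the norms in the summand indexed by `I` are all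
products over `v ∈ I` of a local factor that depends only on `q_v` and `ord_v(𝔫)`. Summing a product
of local factors over all `I ⊆ S(𝔫₁)` gives `∏_{v ∈ S(𝔫₁)} (1 + local factor)`. The local factor is
`q_v^{-2(t+1)}`, times `(1 - q_v⁻¹)⁻¹` when `ord_v(𝔫) = 2`: only then is `ω_v = (q_v+1)/(q_v-1)`,
and only then does `ι` lose the whole factor `(1 + q_v) q_v` rather than `q_v²`. -/

open NumberField UniqueFactorizationMonoid
open scoped Classical

namespace Stmt3

variable (F : Type*) [Field F] [NumberField F]

/-- `S(𝔪)`: the set of prime ideals dividing `𝔪`. -/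
noncomputable def S (𝔪 : Ideal (𝓞 F)) : Finset (Ideal (𝓞 F)) :=
  (normalizedFactors 𝔪).toFinset

/-- `ord_v(𝔪)`: the exponent of the prime `v` in `𝔪`. -/
noncomputable def ordv (v 𝔪 : Ideal (𝓞 F)) : ℕ :=
  (normalizedFactors 𝔪).count v

/-- `S_k(𝔪) = {v ∈ S(𝔪) : ord_v(𝔪) = k}`. -/
noncomputable def Sk (k : ℕ) (𝔪 : Ideal (𝓞 F)) : Finset (Ideal (𝓞 F)) :=
  (S F 𝔪).filter fun v => ordv F v 𝔪 = k

/-- `q_v`: the cardinality of the residue field `𝒪/𝔭_v`, as a real number. -/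
noncomputable def qv (v : Ideal (𝓞 F)) : ℝ := (Ideal.absNorm v : ℝ)

/-- `ω_v(𝔠) = 1` if `v ∈ S(𝔠)`, and `(q_v+1)/(q_v−1)` otherwise. -/
noncomputable def omegav (v 𝔠 : Ideal (𝓞 F)) : ℝ :=
  if v ∈ S F 𝔠 then 1 else (qv F v + 1) / (qv F v - 1)

/-- The quotient ideal `𝔫𝔟⁻¹` when `𝔟 ∣ 𝔫` (junk value `0` otherwise). -/
noncomputable def idealDiv (𝔫 𝔟 : Ideal (𝓞 F)) : Ideal (𝓞 F) :=
  if h : ∃ 𝔠, 𝔫 = 𝔟 * 𝔠 then h.choose else 0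

/-- `𝔫₁`: the unique ideal with `𝔫 = 𝔫₀𝔫₁²`, `𝔫₀` squarefree. -/
noncomputable def nOne (𝔫 : Ideal (𝓞 F)) : Ideal (𝓞 F) :=
  ∏ v ∈ S F 𝔫, v ^ (ordv F v 𝔫 / 2)

/-- `𝔫₀`: the product of the primes occurring in `𝔫` with odd exponent. -/
noncomputable def nZero (𝔫 : Ideal (𝓞 F)) : Ideal (𝓞 F) :=
  ∏ v ∈ S F 𝔫, v ^ (ordv F v 𝔫 % 2)

/-- `ι(𝔪) = ∏_{v∈S(𝔪)} (1+q_v)·q_v^{ord_v(𝔪)−1}`. -/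
noncomputable def iota (𝔪 : Ideal (𝓞 F)) : ℝ :=
  ∏ v ∈ S F 𝔪, (1 + qv F v) * qv F v ^ (ordv F v 𝔪 - 1)

/-- The `𝒩⁺`-transform of a real-valued arithmetic function `B`:
`𝒩⁺[B](𝔫) = Σ_{I ⊆ S(𝔫₁)} (∏_{v∈I∩S₁(𝔫₁)} ω_v(𝔫₀))
            (ι(𝔫∏_{v∈I}𝔭_v⁻²)/ι(𝔫)) B(𝔫∏_{v∈I}𝔭_v⁻²)`. -/
noncomputable def NplusTrans (B : Ideal (𝓞 F) → ℝ) (𝔫 : Ideal (𝓞 F)) : ℝ :=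
  ∑ I ∈ (S F (nOne F 𝔫)).powerset,
    (∏ v ∈ I ∩ Sk F 1 (nOne F 𝔫), omegav F v (nZero F 𝔫)) *
      (iota F (idealDiv F 𝔫 (∏ v ∈ I, v ^ 2)) / iota F 𝔫) *
      B (idealDiv F 𝔫 (∏ v ∈ I, v ^ 2))

theorem count_normalizedFactors_prod_pow {α : Type*} [CommMonoidWithZero α]
    [NormalizationMonoid α] [UniqueFactorizationMonoid α] [Subsingleton αˣ]
    {s : Finset α} (hs : ∀ v ∈ s, Prime v) (k : α → ℕ) (u : α) :
    (normalizedFactors (∏ v ∈ s, v ^ k v)).count u = if u ∈ s then k u else 0 := by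
  have hprod : ∏ v ∈ s, v ^ k v = (∑ v ∈ s, k v • ({v} : Multiset α)).prod := by
    simp [Multiset.prod_sum, Multiset.prod_nsmul]
  rw [hprod, normalizedFactors_prod_of_prime, Multiset.count_sum']
  · simp [Multiset.count_singleton]
  · simpa [Multiset.mem_sum] using fun v hv _ => hs v hv

noncomputable def iotaLocal (q : ℝ) (k : ℕ) : ℝ :=
  if k = 0 then 1 else (1 + q) * q ^ (k - 1)

lemma iotaLocal_pos {q : ℝ} (hq : 0 < q) (k : ℕ) : 0 < iotaLocal q k := by
  unfold iotaLocal
  split_ifs <;> positivity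

noncomputable def nplusLocal (t q : ℝ) (k : ℕ) : ℝ :=
  if k = 2 then (1 - q⁻¹)⁻¹ * q ^ (-2 * (t + 1)) else q ^ (-2 * (t + 1))

lemma omega_mul_iotaLocal_ratio_mul_rpow {q : ℝ} (hq : 1 < q) (t : ℝ) {k : ℕ} (hk : 2 ≤ k) :
    (if k = 2 then (q + 1) / (q - 1) else 1) * (iotaLocal q (k - 2) / iotaLocal q k) *
      q ^ (-2 * t) = nplusLocal t q k := by
  have hq0 : 0 < q := one_pos.trans hq
  have hsplit : q ^ (-2 * (t + 1)) = q ^ (-2 * t) / q ^ 2 := by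
    rw [show -2 * (t + 1) = -2 * t - 2 by ring, Real.rpow_sub hq0, Real.rpow_two]
  rw [nplusLocal, hsplit]
  obtain rfl | ⟨j, rfl⟩ : k = 2 ∨ ∃ j, k = j + 3 := by
    rcases Nat.exists_eq_add_of_le hk with ⟨j, rfl⟩
    rcases j with _ | j
    · exact Or.inl rfl
    · exact Or.inr ⟨j, by ring⟩
  · have hratio : iotaLocal q (2 - 2) / iotaLocal q 2 = ((1 + q) * q)⁻¹ := by
      norm_num [iotaLocal]
    have : q - 1 ≠ 0 := by linarith
    rw [hratio, if_pos rfl, if_pos rfl]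
    field_simp
    ring
  · have hratio : iotaLocal q (j + 3 - 2) / iotaLocal q (j + 3) = (q ^ 2)⁻¹ := by
      rw [iotaLocal, iotaLocal, if_neg (by omega), if_neg (by omega),
        show j + 3 - 2 - 1 = j by omega, show j + 3 - 1 = j + 2 by omega]
      field_simp
      ring
    rw [hratio, if_neg (by omega), if_neg (by omega)]
    ring

section Ideals

variable {F}

lemma one_lt_qv {v : Ideal (𝓞 F)} (hv : Prime v) : 1 < qv F v := by
  unfold qv
  exact_mod_cast NumberField.HeightOneSpectrum.one_lt_absNorm
    ⟨v, Ideal.isPrime_of_prime hv, hv.ne_zero⟩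

lemma qv_pos {v : Ideal (𝓞 F)} (hv : Prime v) : 0 < qv F v :=
  one_pos.trans (one_lt_qv hv)

lemma prime_of_mem_S {v 𝔪 : Ideal (𝓞 F)} (h : v ∈ S F 𝔪) : Prime v :=
  prime_of_normalized_factor v (Multiset.mem_toFinset.mp h)

lemma mem_S_iff_ordv_ne_zero {v 𝔪 : Ideal (𝓞 F)} : v ∈ S F 𝔪 ↔ ordv F v 𝔪 ≠ 0 := by
  rw [S, ordv, Multiset.mem_toFinset, Multiset.count_ne_zero]

lemma ordv_eq_zero_of_notMem_S {v 𝔪 : Ideal (𝓞 F)} (h : v ∉ S F 𝔪) : ordv F v 𝔪 = 0 :=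
  not_not.mp (mt mem_S_iff_ordv_ne_zero.mpr h)

lemma ordv_prod_pow {s : Finset (Ideal (𝓞 F))} (hs : ∀ v ∈ s, Prime v) (k : Ideal (𝓞 F) → ℕ)
    (u : Ideal (𝓞 F)) : ordv F u (∏ v ∈ s, v ^ k v) = if u ∈ s then k u else 0 :=
  count_normalizedFactors_prod_pow hs k u

lemma ordv_mul {𝔞 𝔟 : Ideal (𝓞 F)} (h𝔞 : 𝔞 ≠ 0) (h𝔟 : 𝔟 ≠ 0) (v : Ideal (𝓞 F)) :
    ordv F v (𝔞 * 𝔟) = ordv F v 𝔞 + ordv F v 𝔟 := by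
  rw [ordv, ordv, ordv, normalizedFactors_mul h𝔞 h𝔟, Multiset.count_add]

lemma ordv_prod_S_pow {e : ℕ → ℕ} (he : e 0 = 0) (𝔫 v : Ideal (𝓞 F)) :
    ordv F v (∏ u ∈ S F 𝔫, u ^ e (ordv F u 𝔫)) = e (ordv F v 𝔫) := by
  rw [ordv_prod_pow (fun u hu => prime_of_mem_S hu)]
  split_ifs with hv
  · rfl
  · rw [ordv_eq_zero_of_notMem_S hv, he]

lemma ordv_nOne (𝔫 v : Ideal (𝓞 F)) : ordv F v (nOne F 𝔫) = ordv F v 𝔫 / 2 :=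
  ordv_prod_S_pow (e := (· / 2)) rfl 𝔫 v

lemma ordv_nZero (𝔫 v : Ideal (𝓞 F)) : ordv F v (nZero F 𝔫) = ordv F v 𝔫 % 2 :=
  ordv_prod_S_pow (e := (· % 2)) rfl 𝔫 v

lemma mem_S_nOne {𝔫 v : Ideal (𝓞 F)} : v ∈ S F (nOne F 𝔫) ↔ 2 ≤ ordv F v 𝔫 := by
  rw [mem_S_iff_ordv_ne_zero, ordv_nOne]
  omega

lemma mem_Sk_of_ne_zero {k : ℕ} (hk : k ≠ 0) {𝔪 v : Ideal (𝓞 F)} :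
    v ∈ Sk F k 𝔪 ↔ ordv F v 𝔪 = k := by
  rw [Sk, Finset.mem_filter, mem_S_iff_ordv_ne_zero]
  exact ⟨And.right, fun h => ⟨h ▸ hk, h⟩⟩

lemma Sk_two_subset_S_nOne (𝔫 : Ideal (𝓞 F)) : Sk F 2 𝔫 ⊆ S F (nOne F 𝔫) := fun v hv => by
  rw [mem_S_nOne, (mem_Sk_of_ne_zero two_ne_zero).mp hv]

lemma iota_eq_prod_iotaLocal {𝔪 : Ideal (𝓞 F)} {T : Finset (Ideal (𝓞 F))}
    (hT : S F 𝔪 ⊆ T) : iota F 𝔪 = ∏ v ∈ T, iotaLocal (qv F v) (ordv F v 𝔪) := by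
  refine Finset.prod_subset_one_on_sdiff hT (fun v hv => ?_) (fun v hv => ?_)
  · rw [iotaLocal, if_pos (ordv_eq_zero_of_notMem_S (Finset.mem_sdiff.mp hv).2)]
  · rw [iotaLocal, if_neg (mem_S_iff_ordv_ne_zero.mp hv)]

lemma eq_mul_idealDiv {K : Type*} [Field K] {𝔫 𝔟 : Ideal (𝓞 K)} (h : 𝔟 ∣ 𝔫) :
    𝔫 = 𝔟 * idealDiv K 𝔫 𝔟 := by
  rw [idealDiv, dif_pos (show ∃ 𝔠, 𝔫 = 𝔟 * 𝔠 from h)]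
  exact h.choose_spec

section Quotient

variable {𝔫 : Ideal (𝓞 F)} (h𝔫 : 𝔫 ≠ 0) {I : Finset (Ideal (𝓞 F))}
  (hI : I ⊆ S F (nOne F 𝔫))
include hI

lemma two_le_ordv_of_mem {v : Ideal (𝓞 F)} (hv : v ∈ I) : 2 ≤ ordv F v 𝔫 :=
  mem_S_nOne.mp (hI hv)

lemma subset_S_of_subset_S_nOne : I ⊆ S F 𝔫 := fun v hv => by
  rw [mem_S_iff_ordv_ne_zero]
  have hv2 := two_le_ordv_of_mem hI hv
  omega

lemma prod_sq_ne_zero : ∏ v ∈ I, v ^ 2 ≠ 0 :=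
  Finset.prod_ne_zero_iff.mpr fun _ hv =>
    pow_ne_zero 2 (prime_of_mem_S (subset_S_of_subset_S_nOne hI hv)).ne_zero

lemma ordv_prod_sq (u : Ideal (𝓞 F)) :
    ordv F u (∏ v ∈ I, v ^ 2) = if u ∈ I then 2 else 0 :=
  ordv_prod_pow (fun _ hv => prime_of_mem_S (subset_S_of_subset_S_nOne hI hv)) _ u

lemma prod_omegav_eq :
    ∏ v ∈ I ∩ Sk F 1 (nOne F 𝔫), omegav F v (nZero F 𝔫) =
      ∏ v ∈ I, if ordv F v 𝔫 = 2 then (qv F v + 1) / (qv F v - 1) else 1 := by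
  rw [← Finset.prod_ite_mem]
  refine Finset.prod_congr rfl fun v hv => ?_
  have hv2 := two_le_ordv_of_mem hI hv
  simp only [omegav, mem_Sk_of_ne_zero one_ne_zero, ordv_nOne, mem_S_iff_ordv_ne_zero,
    ordv_nZero]
  split_ifs <;> first | rfl | omega

include h𝔫

lemma prod_sq_dvd : ∏ v ∈ I, v ^ 2 ∣ 𝔫 := by
  rw [dvd_iff_normalizedFactors_le_normalizedFactors (prod_sq_ne_zero hI) h𝔫,
    Multiset.le_iff_count]
  intro u
  change ordv F u _ ≤ ordv F u 𝔫
  rw [ordv_prod_sq hI]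
  split_ifs with hu
  · exact two_le_ordv_of_mem hI hu
  · exact Nat.zero_le _

lemma idealDiv_prod_sq_ne_zero : idealDiv F 𝔫 (∏ v ∈ I, v ^ 2) ≠ 0 :=
  right_ne_zero_of_mul (eq_mul_idealDiv (prod_sq_dvd h𝔫 hI) ▸ h𝔫)

lemma ordv_idealDiv_prod_sq (u : Ideal (𝓞 F)) :
    ordv F u (idealDiv F 𝔫 (∏ v ∈ I, v ^ 2)) = ordv F u 𝔫 - if u ∈ I then 2 else 0 := by
  conv_rhs => rw [eq_mul_idealDiv (prod_sq_dvd h𝔫 hI),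
    ordv_mul (prod_sq_ne_zero hI) (idealDiv_prod_sq_ne_zero h𝔫 hI), ordv_prod_sq hI,
    Nat.add_sub_cancel_left]

lemma absNorm_idealDiv_prod_sq_rpow (t : ℝ) :
    (Ideal.absNorm (idealDiv F 𝔫 (∏ v ∈ I, v ^ 2)) : ℝ) ^ t =
      (Ideal.absNorm 𝔫 : ℝ) ^ t * ∏ v ∈ I, qv F v ^ (-2 * t) := by
  have hN : (Ideal.absNorm 𝔫 : ℝ) =
      (∏ v ∈ I, qv F v ^ 2) * Ideal.absNorm (idealDiv F 𝔫 (∏ v ∈ I, v ^ 2)) := by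
    conv_lhs => rw [eq_mul_idealDiv (prod_sq_dvd h𝔫 hI)]
    push_cast [map_mul, map_prod, map_pow, qv]
    rfl
  have hsq : (0 : ℝ) ≤ ∏ v ∈ I, qv F v ^ 2 := Finset.prod_nonneg fun _ _ => sq_nonneg _
  have hcancel : ∏ v ∈ I, (qv F v ^ 2) ^ t * qv F v ^ (-2 * t) = 1 := by
    refine Finset.prod_eq_one fun v hv => ?_
    have hq := qv_pos (prime_of_mem_S (subset_S_of_subset_S_nOne hI hv))
    rw [← Real.rpow_natCast, ← Real.rpow_mul hq.le, ← Real.rpow_add hq]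
    norm_num
  rw [hN, Real.mul_rpow hsq (Nat.cast_nonneg _),
    ← Real.finsetProd_rpow _ _ (fun _ _ => sq_nonneg _), mul_right_comm,
    ← Finset.prod_mul_distrib, hcancel, one_mul]

lemma iota_idealDiv_prod_sq_div_iota :
    iota F (idealDiv F 𝔫 (∏ v ∈ I, v ^ 2)) / iota F 𝔫 =
      ∏ v ∈ I, iotaLocal (qv F v) (ordv F v 𝔫 - 2) / iotaLocal (qv F v) (ordv F v 𝔫) := by
  have hS : S F (idealDiv F 𝔫 (∏ v ∈ I, v ^ 2)) ⊆ S F 𝔫 := fun v hv => by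
    rw [mem_S_iff_ordv_ne_zero, ordv_idealDiv_prod_sq h𝔫 hI] at hv
    exact mem_S_iff_ordv_ne_zero.mpr (by omega)
  rw [iota_eq_prod_iotaLocal hS, iota_eq_prod_iotaLocal subset_rfl, ← Finset.prod_div_distrib]
  refine (Finset.prod_subset_one_on_sdiff (subset_S_of_subset_S_nOne hI)
    (fun v hv => ?_) (fun v hv => ?_)).symm
  · obtain ⟨hvS, hvI⟩ := Finset.mem_sdiff.mp hv
    rw [ordv_idealDiv_prod_sq h𝔫 hI, if_neg hvI, Nat.sub_zero,
      div_self (iotaLocal_pos (qv_pos (prime_of_mem_S hvS)) _).ne']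
  · rw [ordv_idealDiv_prod_sq h𝔫 hI, if_pos hv]

lemma nplusTrans_summand_absNorm_rpow (t : ℝ) :
    (∏ v ∈ I ∩ Sk F 1 (nOne F 𝔫), omegav F v (nZero F 𝔫)) *
      (iota F (idealDiv F 𝔫 (∏ v ∈ I, v ^ 2)) / iota F 𝔫) *
      (Ideal.absNorm (idealDiv F 𝔫 (∏ v ∈ I, v ^ 2)) : ℝ) ^ t =
    (Ideal.absNorm 𝔫 : ℝ) ^ t * ∏ v ∈ I, nplusLocal t (qv F v) (ordv F v 𝔫) := by
  rw [prod_omegav_eq hI, iota_idealDiv_prod_sq_div_iota h𝔫 hI,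
    absNorm_idealDiv_prod_sq_rpow h𝔫 hI, mul_left_comm, ← Finset.prod_mul_distrib,
    ← Finset.prod_mul_distrib]
  congr 1
  refine Finset.prod_congr rfl fun v hv => ?_
  exact omega_mul_iotaLocal_ratio_mul_rpow
    (one_lt_qv (prime_of_mem_S (subset_S_of_subset_S_nOne hI hv))) t (two_le_ordv_of_mem hI hv)

end Quotient

end Ideals

theorem statement3
    (t : ℝ) (𝔫 : Ideal (𝓞 F)) (h𝔫 : 𝔫 ≠ 0) :
    NplusTrans F (fun 𝔪 => (Ideal.absNorm 𝔪 : ℝ) ^ t) 𝔫 =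
      (Ideal.absNorm 𝔫 : ℝ) ^ t *
        (∏ v ∈ S F (nOne F 𝔫) \ Sk F 2 𝔫, (1 + (qv F v) ^ (-2 * (t + 1)))) *
        (∏ v ∈ Sk F 2 𝔫, (1 + (1 - (qv F v)⁻¹)⁻¹ * (qv F v) ^ (-2 * (t + 1)))) := by
  have hfactor : NplusTrans F (fun 𝔪 => (Ideal.absNorm 𝔪 : ℝ) ^ t) 𝔫 =
      (Ideal.absNorm 𝔫 : ℝ) ^ t *
        ∏ v ∈ S F (nOne F 𝔫), (1 + nplusLocal t (qv F v) (ordv F v 𝔫)) := by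
    rw [NplusTrans, Finset.prod_one_add, Finset.mul_sum]
    exact Finset.sum_congr rfl fun I hI =>
      nplusTrans_summand_absNorm_rpow h𝔫 (Finset.mem_powerset.mp hI) t
  rw [hfactor, ← Finset.prod_sdiff (Sk_two_subset_S_nOne 𝔫), mul_assoc]
  congr 2 <;> refine Finset.prod_congr rfl fun v hv => ?_
  · have hv2 : ordv F v 𝔫 ≠ 2 := fun h =>
      (Finset.mem_sdiff.mp hv).2 ((mem_Sk_of_ne_zero two_ne_zero).mpr h)
    rw [nplusLocal, if_neg hv2]
  · rw [nplusLocal, if_pos ((mem_Sk_of_ne_zero two_ne_zero).mp hv)]
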